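/- arXiv:2512.10792 — 3 statements merged into one kernel-verified Lean document; each statement's English description precedes it below -/
import Mathlib

section
/- Assume g i > 0 for all i : Fin m, the graph is connected, and B ⊆ Fin n is a nonempty set of boundary vertices. Then for every boundary datum p̄ : Fin n → ℝ there exists a unique P : Fin n → ℝ such that P j = p̄ j for all j ∈ B and (L P) j = 0 for all j ∉ B, where L = Cᵀ · diag(g) · C. -/
open Matrix

/-- Oriented incidence matrix of a finite oriented graph given by source and
target maps `s t : Fin m → Fin n`. -/
def incidenceMatrix (n m : ℕ) (s t : Fin m → Fin n) : Matrix (Fin m) (Fin n) ℝ :=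
  fun i j => if j = t i then 1 else if j = s i then -1 else 0

/-- Two vertices are adjacent if some edge has them as its endpoints
(ignoring orientation). -/
def Adj (n m : ℕ) (s t : Fin m → Fin n) (a b : Fin n) : Prop :=
  ∃ i : Fin m, (s i = a ∧ t i = b) ∨ (s i = b ∧ t i = a)

/-- The graph is connected if any two vertices are joined by a finite chain of
adjacent vertices. -/
def GraphConnected (n m : ℕ) (s t : Fin m → Fin n) : Prop :=
  ∀ a b : Fin n, Relation.ReflTransGen (Adj n m s t) a b

/-!
The weighted Laplacian `L = Cᵀ diag(g) C` has the energy identity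
`⟪v, L v⟫ = ∑ᵢ gᵢ (v(tᵢ) - v(sᵢ))²`. If `v` vanishes on `B` and `L v` vanishes off `B`,
the energy vanishes, so `v` is constant along every edge, hence constant on the connected
graph, hence zero since `B ≠ ∅`. This is uniqueness; existence follows because the
Dirichlet problem is a square linear system (`n` equations in `n` unknowns), so an
injective one is surjective.
-/

section Dirichlet

variable {ι K : Type*} [Fintype ι] [Field K]

def IsDirichletSolution (L : Matrix ι ι K) (B : Set ι) (pbar P : ι → K) : Prop :=
  (∀ j ∈ B, P j = pbar j) ∧ ∀ j ∉ B, (L *ᵥ P) j = 0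

open Classical in
noncomputable def dirichletMap (L : Matrix ι ι K) (B : Set ι) : (ι → K) →ₗ[K] (ι → K) where
  toFun P := B.piecewise P (L *ᵥ P)
  map_add' P Q := by
    ext j
    by_cases hj : j ∈ B <;> simp [hj, mulVec_add]
  map_smul' c P := by
    ext j
    by_cases hj : j ∈ B <;> simp [hj, mulVec_smul]

open Classical in
theorem isDirichletSolution_iff_dirichletMap_eq (L : Matrix ι ι K) (B : Set ι) (pbar P : ι → K) :
    IsDirichletSolution L B pbar P ↔ dirichletMap L B P = B.piecewise pbar 0 := by
  simp only [IsDirichletSolution, dirichletMap, LinearMap.coe_mk, AddHom.coe_mk, funext_iff]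
  constructor
  · rintro ⟨hB, hint⟩ j
    by_cases hj : j ∈ B <;> simp [hj, hB, hint]
  · intro h
    refine ⟨fun j hj => ?_, fun j hj => ?_⟩ <;> simpa [hj] using h j

theorem existsUnique_isDirichletSolution_of_homogeneous (L : Matrix ι ι K) (B : Set ι)
    (hom : ∀ v, IsDirichletSolution L B 0 v → v = 0) (pbar : ι → K) :
    ∃! P, IsDirichletSolution L B pbar P := by
  classical
  have hinj : Function.Injective (dirichletMap L B) := by
    rw [← LinearMap.ker_eq_bot, LinearMap.ker_eq_bot']
    intro v hv
    apply hom
    rw [isDirichletSolution_iff_dirichletMap_eq, hv, Set.piecewise_same]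
  have hbij : Function.Bijective (dirichletMap L B) :=
    ⟨hinj, LinearMap.injective_iff_surjective.mp hinj⟩
  simpa only [isDirichletSolution_iff_dirichletMap_eq] using
    hbij.existsUnique (B.piecewise pbar 0)

theorem IsDirichletSolution.dotProduct_mulVec_eq_zero {L : Matrix ι ι K} {B : Set ι}
    {v : ι → K} (hv : IsDirichletSolution L B 0 v) : v ⬝ᵥ (L *ᵥ v) = 0 := by
  refine Finset.sum_eq_zero fun j _ => ?_
  by_cases hj : j ∈ B
  · simp [hv.1 j hj]
  · simp [hv.2 j hj]

end Dirichlet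

theorem dotProduct_transpose_mul_diagonal_mul_mulVec {ι κ R : Type*} [Fintype ι] [Fintype κ]
    [DecidableEq κ] [CommRing R] (C : Matrix κ ι R) (g : κ → R) (v : ι → R) :
    v ⬝ᵥ ((Cᵀ * diagonal g * C) *ᵥ v) = ∑ i, g i * (C *ᵥ v) i ^ 2 := by
  rw [← mulVec_mulVec, ← mulVec_mulVec, dotProduct_mulVec, vecMul_transpose]
  simp only [dotProduct, mulVec_diagonal]
  exact Finset.sum_congr rfl fun i _ => by ring

theorem incidenceMatrix_mulVec {n m : ℕ} {s t : Fin m → Fin n} (hst : ∀ i, s i ≠ t i)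
    (v : Fin n → ℝ) (i : Fin m) :
    (incidenceMatrix n m s t *ᵥ v) i = v (t i) - v (s i) := by
  have hterm : ∀ j, incidenceMatrix n m s t i j * v j
      = (if j = t i then v j else 0) - (if j = s i then v j else 0) := by
    intro j
    by_cases ht : j = t i
    · subst ht
      simp [incidenceMatrix, (hst i).symm]
    · by_cases hs : j = s i <;> simp [incidenceMatrix, ht, hs, hst i]
  simp only [mulVec, dotProduct, hterm, Finset.sum_sub_distrib, Finset.sum_ite_eq',
    Finset.mem_univ, if_true]

theorem GraphConnected.apply_eq_of_forall_edge {n m : ℕ} {s t : Fin m → Fin n} {α : Type*}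
    (hconn : GraphConnected n m s t) {f : Fin n → α} (hf : ∀ i, f (s i) = f (t i))
    (a b : Fin n) : f a = f b := by
  induction hconn a b with
  | refl => rfl
  | tail _ hadj ih =>
    obtain ⟨i, ⟨rfl, rfl⟩ | ⟨rfl, rfl⟩⟩ := hadj
    · rw [ih, hf i]
    · rw [ih, hf i]

theorem eq_zero_of_isDirichletSolution_zero {n m : ℕ} {s t : Fin m → Fin n}
    (hst : ∀ i, s i ≠ t i) {g : Fin m → ℝ} (hg : ∀ i, 0 < g i)
    (hconn : GraphConnected n m s t) {B : Set (Fin n)} (hB : B.Nonempty) {v : Fin n → ℝ}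
    (hv : IsDirichletSolution ((incidenceMatrix n m s t)ᵀ * diagonal g *
      incidenceMatrix n m s t) B 0 v) : v = 0 := by
  have henergy : ∑ i, g i * (incidenceMatrix n m s t *ᵥ v) i ^ 2 = 0 := by
    rw [← dotProduct_transpose_mul_diagonal_mul_mulVec, hv.dotProduct_mulVec_eq_zero]
  have hedge : ∀ i, v (s i) = v (t i) := by
    intro i
    have hi := (Finset.sum_eq_zero_iff_of_nonneg fun i _ =>
      mul_nonneg (hg i).le (sq_nonneg _)).mp henergy i (Finset.mem_univ i)
    rw [mul_eq_zero, or_iff_right (hg i).ne', sq_eq_zero_iff,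
      incidenceMatrix_mulVec hst] at hi
    linarith
  obtain ⟨b, hb⟩ := hB
  funext j
  exact (hconn.apply_eq_of_forall_edge hedge j b).trans (hv.1 b hb)

/-- Well-posedness of the discrete Dirichlet problem: for positive conductances,
a connected graph and a nonempty boundary set `B`, every boundary datum admits a
unique extension `P` that is "discretely harmonic" off `B`. -/
theorem discrete_dirichlet_existence_uniqueness (n m : ℕ) (s t : Fin m → Fin n)
    (hst : ∀ i, s i ≠ t i) (g : Fin m → ℝ) (hg : ∀ i, 0 < g i)
    (hconn : GraphConnected n m s t) (B : Set (Fin n)) (hB : B.Nonempty)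
    (pbar : Fin n → ℝ) :
    ∃! P : Fin n → ℝ,
      (∀ j ∈ B, P j = pbar j) ∧
      (∀ j ∉ B, ((incidenceMatrix n m s t)ᵀ * Matrix.diagonal g *
          incidenceMatrix n m s t).mulVec P j = 0) :=
  existsUnique_isDirichletSolution_of_homogeneous _ B
    (fun _ hv => eq_zero_of_isDirichletSolution_zero hst hg hconn hB hv) pbar
end

section
/- Discrete maximum principle: assume g i > 0 for all i : Fin m, the graph is connected, and B ⊆ Fin n is nonempty. If P : Fin n → ℝ satisfies (L P) j = 0 for all j ∉ B, where L = Cᵀ · diag(g) · C, then for every vertex k, min over j ∈ B of P j ≤ P k ≤ max over j ∈ B of P j. -/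
/- If a vertex `j ∉ B` carries the global maximum of `P`, then `(L P) j` is a sum of the
nonnegative terms `g i (P j - P w)` over the edges `i` joining `j` to a neighbour `w`; it vanishes,
so every neighbour also carries the maximum. Following a path from a global maximizer to `B`, the
maximum spreads until it reaches `B`. Applying this to `-P` gives the minimum. -/

open Matrix

section IncidenceMatrix

variable {n m : ℕ} {s t : Fin m → Fin n}

theorem incidenceMatrix_mul_sub_of_endpoints {i : Fin m} (hst : s i ≠ t i) {j w : Fin n}
    (h : (s i = j ∧ t i = w) ∨ (s i = w ∧ t i = j)) (P : Fin n → ℝ) :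
    incidenceMatrix n m s t i j * (P (t i) - P (s i)) = P j - P w := by
  rcases h with ⟨rfl, rfl⟩ | ⟨rfl, rfl⟩
  · simp [incidenceMatrix, hst]
  · simp [incidenceMatrix]

theorem incidenceMatrix_mul_sub_nonneg {i : Fin m} (hst : s i ≠ t i) {P : Fin n → ℝ}
    {j : Fin n} (hmax : ∀ x, P x ≤ P j) :
    0 ≤ incidenceMatrix n m s t i j * (P (t i) - P (s i)) := by
  by_cases hs : s i = j
  · rw [incidenceMatrix_mul_sub_of_endpoints hst (.inl ⟨hs, rfl⟩)]
    linarith [hmax (t i)]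
  by_cases ht : t i = j
  · rw [incidenceMatrix_mul_sub_of_endpoints hst (.inr ⟨rfl, ht⟩)]
    linarith [hmax (s i)]
  simp [incidenceMatrix, Ne.symm hs, Ne.symm ht]

theorem incidenceMatrix_mulVec_apply {i : Fin m} (hst : s i ≠ t i) (P : Fin n → ℝ) :
    (incidenceMatrix n m s t *ᵥ P) i = P (t i) - P (s i) := by
  have hterm : ∀ k, incidenceMatrix n m s t i k * P k =
      (if k = t i then P k else 0) - (if k = s i then P k else 0) := by
    intro k
    by_cases h1 : k = t i <;> by_cases h2 : k = s i <;>
      simp [incidenceMatrix, h1, h2, hst, hst.symm]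
  simp only [mulVec, dotProduct, hterm, Finset.sum_sub_distrib, Finset.sum_ite_eq',
    Finset.mem_univ, if_true]

theorem laplacian_mulVec_apply (hst : ∀ i, s i ≠ t i) (g : Fin m → ℝ) (P : Fin n → ℝ)
    (j : Fin n) :
    (((incidenceMatrix n m s t)ᵀ * diagonal g * incidenceMatrix n m s t) *ᵥ P) j =
      ∑ i, g i * (incidenceMatrix n m s t i j * (P (t i) - P (s i))) := by
  have hflow : diagonal g *ᵥ (incidenceMatrix n m s t *ᵥ P) =
      fun i => g i * (P (t i) - P (s i)) :=
    funext fun i => by rw [mulVec_diagonal, incidenceMatrix_mulVec_apply (hst i)]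
  rw [← mulVec_mulVec, ← mulVec_mulVec, hflow, mulVec_transpose, vecMul, dotProduct]
  exact Finset.sum_congr rfl fun i _ => by ring

theorem forall_le_of_adj_of_laplacian_mulVec_eq_zero (hst : ∀ i, s i ≠ t i) {g : Fin m → ℝ}
    (hg : ∀ i, 0 < g i) {P : Fin n → ℝ} {j w : Fin n} (hmax : ∀ x, P x ≤ P j)
    (hL : (((incidenceMatrix n m s t)ᵀ * diagonal g * incidenceMatrix n m s t) *ᵥ P) j = 0)
    (hadj : Adj n m s t j w) : ∀ x, P x ≤ P w := by
  obtain ⟨i, hi⟩ := hadj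
  rw [laplacian_mulVec_apply hst] at hL
  have hterms := (Finset.sum_eq_zero_iff_of_nonneg fun i _ =>
    mul_nonneg (hg i).le (incidenceMatrix_mul_sub_nonneg (hst i) hmax)).1 hL i (Finset.mem_univ i)
  rw [incidenceMatrix_mul_sub_of_endpoints (hst i) hi] at hterms
  have hPw : P w = P j := by
    linarith [(mul_eq_zero.1 hterms).resolve_left (hg i).ne']
  simpa only [hPw] using hmax

end IncidenceMatrix

theorem Relation.ReflTransGen.exists_mem_of_invariant_off {α : Type*} {r : α → α → Prop}
    {S : Set α} {Q : α → Prop} (hQ : ∀ x y, Q x → x ∉ S → r x y → Q y) {a b : α}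
    (hab : Relation.ReflTransGen r a b) (hb : b ∈ S) (ha : Q a) : ∃ c ∈ S, Q c := by
  induction hab using Relation.ReflTransGen.head_induction_on with
  | refl => exact ⟨_, hb, ha⟩
  | @head x y hxy _ ih =>
    by_cases hx : x ∈ S
    · exact ⟨x, hx, ha⟩
    · exact ih (hQ x y ha hx hxy)

theorem exists_mem_forall_le_of_laplacian_mulVec_eq_zero {n m : ℕ} {s t : Fin m → Fin n}
    (hst : ∀ i, s i ≠ t i) {g : Fin m → ℝ} (hg : ∀ i, 0 < g i)
    (hconn : GraphConnected n m s t) {B : Finset (Fin n)} (hB : B.Nonempty) {P : Fin n → ℝ}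
    (hP : ∀ j ∉ B, (((incidenceMatrix n m s t)ᵀ * diagonal g *
        incidenceMatrix n m s t) *ᵥ P) j = 0) :
    ∃ c ∈ B, ∀ x, P x ≤ P c := by
  obtain ⟨b, hb⟩ := hB
  have : Nonempty (Fin n) := ⟨b⟩
  obtain ⟨v, hv⟩ := Finite.exists_max P
  refine (hconn v b).exists_mem_of_invariant_off (S := (B : Set (Fin n)))
    (Q := fun x => ∀ y, P y ≤ P x) ?_ hb hv
  intro x y hx hxB hxy
  exact forall_le_of_adj_of_laplacian_mulVec_eq_zero hst hg hx (hP x hxB) hxy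

/-- Discrete maximum principle: a vector that is discretely harmonic off the
boundary set `B` attains its extrema on `B`. -/
theorem discrete_maximum_principle (n m : ℕ) (s t : Fin m → Fin n)
    (hst : ∀ i, s i ≠ t i) (g : Fin m → ℝ) (hg : ∀ i, 0 < g i)
    (hconn : GraphConnected n m s t) (B : Finset (Fin n)) (hB : B.Nonempty)
    (P : Fin n → ℝ)
    (hP : ∀ j ∉ B, ((incidenceMatrix n m s t)ᵀ * Matrix.diagonal g *
        incidenceMatrix n m s t).mulVec P j = 0) :
    ∀ k : Fin n, B.inf' hB P ≤ P k ∧ P k ≤ B.sup' hB P := by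
  intro k
  obtain ⟨c, hcB, hc⟩ := exists_mem_forall_le_of_laplacian_mulVec_eq_zero hst hg hconn hB hP
  have hPneg : ∀ j ∉ B, (((incidenceMatrix n m s t)ᵀ * diagonal g *
      incidenceMatrix n m s t) *ᵥ -P) j = 0 := fun j hj => by
    simp [mulVec_neg, hP j hj]
  obtain ⟨d, hdB, hd⟩ := exists_mem_forall_le_of_laplacian_mulVec_eq_zero hst hg hconn hB hPneg
  exact ⟨(B.inf'_le P hdB).trans (neg_le_neg_iff.1 (hd k)), (hc k).trans (B.le_sup' P hcB)⟩
end

section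
/- Lower triangularity of the convection matrix under topological ordering: assume s i < t i (as elements of Fin n) for every edge i : Fin m. Then for any Q : Fin m → ℝ, the n × n matrix M = Cᵀ · diag(Q) · ⟦−C⟧ satisfies M j k = 0 whenever j < k; that is, M is lower triangular. -/
open Matrix

/-- Entrywise positive-part operator `⟦X⟧ i j = max (X i j) 0`. -/
def posPart {α β : Type*} (X : Matrix α β ℝ) : Matrix α β ℝ :=
  fun i j => max (X i j) 0

section IncidenceMatrix

variable {n m : ℕ} {s t : Fin m → Fin n}

theorem incidenceMatrix_apply_of_ne {i : Fin m} {j : Fin n} (hjt : j ≠ t i) (hjs : j ≠ s i) :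
    incidenceMatrix n m s t i j = 0 := by
  simp [incidenceMatrix, hjt, hjs]

theorem posPart_neg_incidenceMatrix_apply {i : Fin m} (hi : s i ≠ t i) (k : Fin n) :
    posPart (-incidenceMatrix n m s t) i k = if k = s i then 1 else 0 := by
  by_cases hks : k = s i
  · subst hks
    simp [_root_.posPart, incidenceMatrix, hi]
  · by_cases hkt : k = t i <;> simp [_root_.posPart, incidenceMatrix, hks, hkt, hi.symm]

end IncidenceMatrix

theorem Matrix.transpose_mul_diagonal_mul_apply {ι α β R : Type*} [Fintype ι] [DecidableEq ι]
    [NonUnitalNonAssocSemiring R] (A : Matrix ι α R) (Q : ι → R) (B : Matrix ι β R)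
    (j : α) (k : β) :
    (Aᵀ * diagonal Q * B) j k = ∑ i, A i j * Q i * B i k := by
  simp [mul_apply, diagonal_apply]

/-- Lower triangularity of the convection matrix under topological ordering of
the vertices: if `s i < t i` for every edge, then
`M = Cᵀ ⬝ diag Q ⬝ ⟦-C⟧` has vanishing entries above the diagonal. -/
theorem convection_matrix_lower_triangular (n m : ℕ) (s t : Fin m → Fin n)
    (hst : ∀ i : Fin m, s i < t i) (Q : Fin m → ℝ) :
    ∀ j k : Fin n, j < k →
      ((incidenceMatrix n m s t)ᵀ * Matrix.diagonal Q *
        posPart (-(incidenceMatrix n m s t))) j k = 0 := by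
  intro j k hjk
  rw [Matrix.transpose_mul_diagonal_mul_apply]
  refine Finset.sum_eq_zero fun i _ => ?_
  rw [posPart_neg_incidenceMatrix_apply (hst i).ne]
  split_ifs with hks
  · -- an edge leaving `k` touches only `k` and a later vertex, never `j < k`
    have hjs : j < s i := hks ▸ hjk
    rw [incidenceMatrix_apply_of_ne (hjs.trans (hst i)).ne hjs.ne, zero_mul, zero_mul]
  · rw [mul_zero]
end
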